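/- (Fletcher–Reeves, standard Wolfe) Let 0 ≤ δ < 1 and assume Assumptions A1 and A2 hold for x⁰. Consider the conjugate gradient iteration with the Fletcher–Reeves bound |β_k| ≤ δ·β_k^{FR}, where β_k^{FR} := ψ_{x^k}(v(x^k)) / ψ_{x^{k−1}}(v(x^{k−1})) for k ≥ 1. If there exists c > 0 such that ψ_{x^k}(d^k) ≤ c·ψ_{x^k}(v(x^k)) for all k ≥ 0 (sufficient descent), and each t_k satisfies the standard Wolfe conditions at x^k along d^k, then liminf_{k→∞} ‖v(x^k)‖ = 0. -/

import Mathlib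

open scoped BigOperators

noncomputable def pd (n : ℕ) (F : EuclideanSpace ℝ (Fin n) → ℝ)
    (x : EuclideanSpace ℝ (Fin n)) (j : Fin n) : ℝ :=
  fderiv ℝ F x (EuclideanSpace.single j (1 : ℝ))

noncomputable def glo (n : ℕ) (F H : EuclideanSpace ℝ (Fin n) → ℝ)
    (x : EuclideanSpace ℝ (Fin n)) (j : Fin n) : ℝ :=
  min (pd n F x j) (pd n H x j)

noncomputable def ghi (n : ℕ) (F H : EuclideanSpace ℝ (Fin n) → ℝ)
    (x : EuclideanSpace ℝ (Fin n)) (j : Fin n) : ℝ :=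
  max (pd n F x j) (pd n H x j)

noncomputable def gloVec (n : ℕ) (F H : EuclideanSpace ℝ (Fin n) → ℝ)
    (x : EuclideanSpace ℝ (Fin n)) : EuclideanSpace ℝ (Fin n) :=
  WithLp.toLp 2 (fun j => glo n F H x j)

noncomputable def ghiVec (n : ℕ) (F H : EuclideanSpace ℝ (Fin n) → ℝ)
    (x : EuclideanSpace ℝ (Fin n)) : EuclideanSpace ℝ (Fin n) :=
  WithLp.toLp 2 (fun j => ghi n F H x j)

noncomputable def psi (m n : ℕ) (Gl Gu : Fin m → EuclideanSpace ℝ (Fin n) → ℝ)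
    (x v : EuclideanSpace ℝ (Fin n)) : ℝ :=
  ⨆ i : Fin m, (1 / 2 : ℝ) *
    ((∑ j : Fin n, (glo n (Gl i) (Gu i) x j + ghi n (Gl i) (Gu i) x j) * v j) +
     (∑ j : Fin n, (ghi n (Gl i) (Gu i) x j - glo n (Gl i) (Gu i) x j) * |v j|))

def LevelSet (m n : ℕ) (Gl Gu : Fin m → EuclideanSpace ℝ (Fin n) → ℝ)
    (x0 : EuclideanSpace ℝ (Fin n)) : Set (EuclideanSpace ℝ (Fin n)) :=
  {x | ∀ i : Fin m, Gl i x ≤ Gl i x0 ∧ Gu i x ≤ Gu i x0}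

def StdWolfe (m n : ℕ) (Gl Gu : Fin m → EuclideanSpace ℝ (Fin n) → ℝ)
    (ρ σ : ℝ) (x d : EuclideanSpace ℝ (Fin n)) (t : ℝ) : Prop :=
  (∀ i : Fin m,
      Gl i (x + t • d) ≤ Gl i x + ρ * t * psi m n Gl Gu x d ∧
      Gu i (x + t • d) ≤ Gu i x + ρ * t * psi m n Gl Gu x d) ∧
  σ * psi m n Gl Gu x d ≤ psi m n Gl Gu (x + t • d) d

def StrongWolfe (m n : ℕ) (Gl Gu : Fin m → EuclideanSpace ℝ (Fin n) → ℝ)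
    (ρ σ : ℝ) (x d : EuclideanSpace ℝ (Fin n)) (t : ℝ) : Prop :=
  (∀ i : Fin m,
      Gl i (x + t • d) ≤ Gl i x + ρ * t * psi m n Gl Gu x d ∧
      Gu i (x + t • d) ≤ Gu i x + ρ * t * psi m n Gl Gu x d) ∧
  |psi m n Gl Gu (x + t • d) d| ≤ σ * |psi m n Gl Gu x d|

def AssumptionA1 (m n : ℕ) (Gl Gu : Fin m → EuclideanSpace ℝ (Fin n) → ℝ)
    (x0 : EuclideanSpace ℝ (Fin n)) : Prop :=
  ∀ i : Fin m, ∃ L : ℝ, 0 < L ∧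
    ∀ y ∈ LevelSet m n Gl Gu x0, ∀ z ∈ LevelSet m n Gl Gu x0,
      ‖gloVec n (Gl i) (Gu i) y - gloVec n (Gl i) (Gu i) z‖ ≤ L * ‖y - z‖ ∧
      ‖ghiVec n (Gl i) (Gu i) y - ghiVec n (Gl i) (Gu i) z‖ ≤ L * ‖y - z‖

def AssumptionA2 (m n : ℕ) (Gl Gu : Fin m → EuclideanSpace ℝ (Fin n) → ℝ)
    (x0 : EuclideanSpace ℝ (Fin n)) : Prop :=
  ∀ y : ℕ → EuclideanSpace ℝ (Fin n),
    (∀ k, y k ∈ LevelSet m n Gl Gu x0) →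
    (∀ (i : Fin m) (k : ℕ), Gl i (y (k+1)) ≤ Gl i (y k) ∧ Gu i (y (k+1)) ≤ Gu i (y k)) →
    ∀ i : Fin m, (∃ Cl : ℝ, ∀ k, Cl ≤ Gl i (y k)) ∧ (∃ Cu : ℝ, ∀ k, Cu ≤ Gu i (y k))

/-!
Positive homogeneity of `ψ_x` and the minimality of `v(x)` force `ψ_x(v(x)) = -‖v(x)‖²`, so the
Fletcher–Reeves bound reads `|β_{k+1}| ≤ δ ‖v(x^{k+1})‖² / ‖v(x^k)‖²`. Along the descent
directions the Armijo condition decreases every endpoint function, so the iterates stay in `L₀`,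
where `ψ` is Lipschitz in the base point by A1. Together with the curvature condition and the
lower bound from A2 this gives the Zoutendijk condition `∑ ψ_{x^k}(d^k)² / ‖d^k‖² < ∞`.
If `‖v(x^k)‖ ≥ ε` from some index on, the recursion `d^{k+1} = v(x^{k+1}) + β_{k+1} d^k` keeps
`‖d^k‖ ≤ B ‖v(x^k)‖²`, while sufficient descent gives `|ψ_{x^k}(d^k)| ≥ c ‖v(x^k)‖²`; the
Zoutendijk terms are then bounded below by `c² / B²`, a contradiction.
-/

open Filter

theorem eq_neg_norm_sq_of_forall_le {E : Type*} [SeminormedAddCommGroup E] [NormedSpace ℝ E]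
    {φ : E → ℝ} (hφ : ∀ c : ℝ, 0 ≤ c → ∀ w, φ (c • w) = c * φ w) {v : E}
    (hv : ∀ w, φ v + 1 / 2 * ‖v‖ ^ 2 ≤ φ w + 1 / 2 * ‖w‖ ^ 2) :
    φ v = -‖v‖ ^ 2 := by
  -- along the ray through `v` the objective is the quadratic `s ↦ s φ v + s² ‖v‖² / 2`,
  -- minimal at `s = 1`, so its derivative `φ v + ‖v‖²` vanishes there
  set q : ℝ → ℝ := fun s => s * φ v + 1 / 2 * s ^ 2 * ‖v‖ ^ 2
  have hmin : IsLocalMin q 1 := by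
    filter_upwards [Ioi_mem_nhds one_pos] with s hs
    have h := hv (s • v)
    rw [hφ s (le_of_lt hs), norm_smul, Real.norm_of_nonneg (le_of_lt hs)] at h
    simp only [q]
    linarith
  have hderiv : HasDerivAt q (φ v + ‖v‖ ^ 2) 1 := by
    have := ((hasDerivAt_id (1 : ℝ)).mul_const (φ v)).add
      (((hasDerivAt_pow 2 (1 : ℝ)).const_mul (1 / 2)).mul_const (‖v‖ ^ 2))
    exact this.congr_deriv (by norm_num)
  linarith [hmin.hasDerivAt_eq_zero hderiv]

section Box

variable {ι : Type*}

noncomputable def absVec (v : EuclideanSpace ℝ ι) : EuclideanSpace ℝ ι :=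
  WithLp.toLp 2 fun j => |v j|

@[simp]
theorem absVec_apply (v : EuclideanSpace ℝ ι) (j : ι) : absVec v j = |v j| := rfl

@[simp]
theorem norm_absVec [Fintype ι] (v : EuclideanSpace ℝ ι) : ‖absVec v‖ = ‖v‖ := by
  simp [EuclideanSpace.norm_eq]

theorem absVec_smul_of_nonneg {c : ℝ} (hc : 0 ≤ c) (v : EuclideanSpace ℝ ι) :
    absVec (c • v) = c • absVec v := by
  ext j
  simp [abs_mul, abs_of_nonneg hc]

variable [Fintype ι]

/-- The support function `v ↦ max {⟪g, v⟫ | a ≤ g ≤ b}` of the box `[a, b]` (when `a ≤ b`). -/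
noncomputable def boxSupport (a b v : EuclideanSpace ℝ ι) : ℝ :=
  1 / 2 * (inner ℝ (a + b) v + inner ℝ (b - a) (absVec v))

theorem boxSupport_smul_of_nonneg (a b : EuclideanSpace ℝ ι) {c : ℝ} (hc : 0 ≤ c)
    (v : EuclideanSpace ℝ ι) : boxSupport a b (c • v) = c * boxSupport a b v := by
  simp only [boxSupport, absVec_smul_of_nonneg hc, inner_smul_right]
  ring

theorem boxSupport_sub_boxSupport_le (a b a' b' v : EuclideanSpace ℝ ι) :
    boxSupport a b v - boxSupport a' b' v ≤ (‖a - a'‖ + ‖b - b'‖) * ‖v‖ := by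
  have hsum := real_inner_le_norm ((a - a') + (b - b')) v
  have hdiff := real_inner_le_norm ((b - b') - (a - a')) (absVec v)
  rw [norm_absVec] at hdiff
  have h1 := norm_add_le (a - a') (b - b')
  have h2 := norm_sub_le (b - b') (a - a')
  have hv := norm_nonneg v
  calc boxSupport a b v - boxSupport a' b' v
      = 1 / 2 * (inner ℝ ((a - a') + (b - b')) v
          + inner ℝ ((b - b') - (a - a')) (absVec v)) := by
        simp only [boxSupport, inner_add_left, inner_sub_left]; ring
    _ ≤ (‖a - a'‖ + ‖b - b'‖) * ‖v‖ := by nlinarith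

end Box

section Psi

variable {m n : ℕ} {Gl Gu : Fin m → EuclideanSpace ℝ (Fin n) → ℝ}

theorem psi_eq_iSup_boxSupport (x v : EuclideanSpace ℝ (Fin n)) :
    psi m n Gl Gu x v =
      ⨆ i, boxSupport (gloVec n (Gl i) (Gu i) x) (ghiVec n (Gl i) (Gu i) x) v := by
  unfold psi boxSupport
  congr! 3 with i
  simp [PiLp.inner_apply, gloVec, ghiVec, mul_comm]

theorem psi_smul_of_nonneg (x : EuclideanSpace ℝ (Fin n)) {c : ℝ} (hc : 0 ≤ c)
    (v : EuclideanSpace ℝ (Fin n)) : psi m n Gl Gu x (c • v) = c * psi m n Gl Gu x v := by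
  simp only [psi_eq_iSup_boxSupport, boxSupport_smul_of_nonneg _ _ hc,
    Real.mul_iSup_of_nonneg hc]

theorem psi_zero (x : EuclideanSpace ℝ (Fin n)) : psi m n Gl Gu x 0 = 0 := by
  simpa using psi_smul_of_nonneg (Gl := Gl) (Gu := Gu) x le_rfl 0

theorem psi_apply_eq_neg_norm_sq {v : EuclideanSpace ℝ (Fin n)} (x : EuclideanSpace ℝ (Fin n))
    (hv : ∀ w, psi m n Gl Gu x v + 1 / 2 * ‖v‖ ^ 2 ≤ psi m n Gl Gu x w + 1 / 2 * ‖w‖ ^ 2) :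
    psi m n Gl Gu x v = -‖v‖ ^ 2 :=
  eq_neg_norm_sq_of_forall_le (fun _ hc => psi_smul_of_nonneg x hc) hv

theorem AssumptionA1.exists_psi_sub_psi_le [NeZero m] {x0 : EuclideanSpace ℝ (Fin n)}
    (hA1 : AssumptionA1 m n Gl Gu x0) :
    ∃ L, 0 ≤ L ∧ ∀ y ∈ LevelSet m n Gl Gu x0, ∀ z ∈ LevelSet m n Gl Gu x0, ∀ v,
      psi m n Gl Gu y v - psi m n Gl Gu z v ≤ L * ‖y - z‖ * ‖v‖ := by
  choose L hL hLip using hA1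
  have hL2 : ∀ i, 0 ≤ 2 * L i := fun i => by linarith [hL i]
  refine ⟨∑ i, 2 * L i, Finset.sum_nonneg fun i _ => hL2 i, fun y hy z hz v => ?_⟩
  rw [psi_eq_iSup_boxSupport, psi_eq_iSup_boxSupport, sub_le_iff_le_add]
  refine ciSup_le fun i => ?_
  have hz_le := le_ciSup (Set.finite_range fun i =>
    boxSupport (gloVec n (Gl i) (Gu i) z) (ghiVec n (Gl i) (Gu i) z) v).bddAbove i
  have hi := boxSupport_sub_boxSupport_le (gloVec n (Gl i) (Gu i) y) (ghiVec n (Gl i) (Gu i) y)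
    (gloVec n (Gl i) (Gu i) z) (ghiVec n (Gl i) (Gu i) z) v
  have hLi : 2 * L i ≤ ∑ j, 2 * L j :=
    Finset.single_le_sum (f := fun j => 2 * L j) (fun j _ => hL2 j) (Finset.mem_univ i)
  have hgap : (‖gloVec n (Gl i) (Gu i) y - gloVec n (Gl i) (Gu i) z‖
      + ‖ghiVec n (Gl i) (Gu i) y - ghiVec n (Gl i) (Gu i) z‖) * ‖v‖
      ≤ (∑ j, 2 * L j) * ‖y - z‖ * ‖v‖ := by
    refine mul_le_mul_of_nonneg_right ?_ (norm_nonneg v)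
    nlinarith [hLip i y hy z hz, norm_nonneg (y - z)]
  linarith

end Psi

theorem summable_sq_div_sq_of_armijo_of_curvature {f Ψ t D : ℕ → ℝ} {ρ σ L C : ℝ}
    (hρ : 0 < ρ) (hσ : σ < 1) (hL : 0 ≤ L) (hΨ : ∀ k, Ψ k < 0)
    (harmijo : ∀ k, f (k + 1) ≤ f k + ρ * t k * Ψ k) (hC : ∀ k, C ≤ f k)
    (hcurv : ∀ k, (1 - σ) * -Ψ k ≤ L * t k * D k ^ 2) :
    Summable fun k => Ψ k ^ 2 / D k ^ 2 := by
  have hσ' : 0 < 1 - σ := by linarith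
  have hterm : ∀ k, Ψ k ^ 2 / D k ^ 2 ≤ L / (1 - σ) * (t k * -Ψ k) := fun k => by
    have hD : D k ^ 2 ≠ 0 := fun h => by
      have := hcurv k
      rw [h, mul_zero] at this
      nlinarith [hΨ k]
    have hrhs : L / (1 - σ) * (t k * -Ψ k) * D k ^ 2 = L * t k * D k ^ 2 * -Ψ k / (1 - σ) := by
      field_simp
    rw [div_le_iff₀ ((sq_nonneg _).lt_of_ne' hD), hrhs, le_div_iff₀ hσ']
    nlinarith [mul_le_mul_of_nonneg_right (hcurv k) (neg_nonneg.2 (hΨ k).le)]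
  have htel : ∀ N, ρ * ∑ k ∈ Finset.range N, t k * -Ψ k ≤ f 0 - f N := fun N => by
    induction N with
    | zero => simp
    | succ N ih =>
      rw [Finset.sum_range_succ, mul_add]
      linarith [harmijo N]
  refine summable_of_sum_range_le (c := L / (1 - σ) * ((f 0 - C) / ρ))
    (fun k => by positivity) fun N => ?_
  calc ∑ k ∈ Finset.range N, Ψ k ^ 2 / D k ^ 2
      ≤ ∑ k ∈ Finset.range N, L / (1 - σ) * (t k * -Ψ k) := Finset.sum_le_sum fun k _ => hterm k
    _ = L / (1 - σ) * ∑ k ∈ Finset.range N, t k * -Ψ k := (Finset.mul_sum ..).symm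
    _ ≤ L / (1 - σ) * ((f 0 - C) / ρ) := by
      refine mul_le_mul_of_nonneg_left ?_ (div_nonneg hL hσ'.le)
      rw [le_div_iff₀ hρ]
      linarith [htel N, hC N]

theorem le_max_of_le_add_mul {u : ℕ → ℝ} {a δ : ℝ} (hδ0 : 0 ≤ δ) (hδ1 : δ < 1)
    (h : ∀ k, u (k + 1) ≤ a + δ * u k) (k : ℕ) : u k ≤ max (u 0) (a / (1 - δ)) := by
  have hM : a ≤ (1 - δ) * max (u 0) (a / (1 - δ)) :=
    (div_le_iff₀' (sub_pos.2 hδ1)).1 (le_max_right _ _)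
  induction k with
  | zero => exact le_max_left _ _
  | succ k ih => linarith [h k, mul_le_mul_of_nonneg_left ih hδ0]

theorem exists_le_mul_sq_of_fletcherReeves {V D : ℕ → ℝ} {δ ε : ℝ} {N : ℕ}
    (hδ0 : 0 ≤ δ) (hδ1 : δ < 1) (hε : 0 < ε) (hD : ∀ k, 0 < D k) (hV : ∀ k ≥ N, ε ≤ V k)
    (hrec : ∀ k, D (k + 1) ≤ V (k + 1) + δ * (V (k + 1) ^ 2 / V k ^ 2) * D k) :
    ∃ B > 0, ∀ k ≥ N, D k ≤ B * V k ^ 2 := by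
  have hVpos : ∀ k ≥ N, 0 < V k := fun k hk => hε.trans_le (hV k hk)
  set u : ℕ → ℝ := fun j => D (N + j) / V (N + j) ^ 2
  have hu : ∀ j, u (j + 1) ≤ 1 / ε + δ * u j := fun j => by
    have hV₀ := hVpos (N + j) (by omega)
    have hV₁ := hVpos (N + j + 1) (by omega)
    calc u (j + 1)
        ≤ (V (N + j + 1) + δ * (V (N + j + 1) ^ 2 / V (N + j) ^ 2) * D (N + j))
          / V (N + j + 1) ^ 2 := div_le_div_of_nonneg_right (hrec (N + j)) (sq_nonneg _)
      _ = 1 / V (N + j + 1) + δ * u j := by simp only [u]; field_simp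
      _ ≤ 1 / ε + δ * u j := by gcongr; exact hV _ (by omega)
  refine ⟨max (u 0) (1 / ε / (1 - δ)),
    (div_pos (hD N) (pow_pos (hVpos N le_rfl) 2)).trans_le (le_max_left _ _), fun k hk => ?_⟩
  obtain ⟨j, rfl⟩ := Nat.exists_eq_add_of_le hk
  exact (div_le_iff₀ (pow_pos (hVpos _ hk) 2)).1 (le_max_of_le_add_mul hδ0 hδ1 hu j)

theorem frequently_lt_of_summable_sq_div_sq {V D Ψ : ℕ → ℝ} {c δ ε : ℝ}
    (hc : 0 < c) (hδ0 : 0 ≤ δ) (hδ1 : δ < 1) (hε : 0 < ε) (hD : ∀ k, 0 < D k)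
    (hΨ : ∀ k, Ψ k ≤ -(c * V k ^ 2))
    (hrec : ∀ k, D (k + 1) ≤ V (k + 1) + δ * (V (k + 1) ^ 2 / V k ^ 2) * D k)
    (hsum : Summable fun k => Ψ k ^ 2 / D k ^ 2) :
    ∃ᶠ k in atTop, V k < ε := by
  by_contra hfar
  simp only [not_frequently, not_lt, eventually_atTop] at hfar
  obtain ⟨N, hN⟩ := hfar
  obtain ⟨B, hB, hDB⟩ := exists_le_mul_sq_of_fletcherReeves hδ0 hδ1 hε hD hN hrec
  have hlow : ∀ k ≥ N, c ^ 2 / B ^ 2 ≤ Ψ k ^ 2 / D k ^ 2 := fun k hk => by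
    have hV : 0 < V k := hε.trans_le (hN k hk)
    have hcV : (c * V k ^ 2) ^ 2 ≤ Ψ k ^ 2 := by
      rw [← neg_sq (Ψ k)]
      exact pow_le_pow_left₀ (by positivity) (by linarith [hΨ k]) 2
    calc c ^ 2 / B ^ 2 = (c * V k ^ 2) ^ 2 / (B * V k ^ 2) ^ 2 := by field_simp
      _ ≤ Ψ k ^ 2 / D k ^ 2 := div_le_div₀ (sq_nonneg _) hcV (pow_pos (hD k) 2)
          (pow_le_pow_left₀ (hD k).le (hDB k hk) 2)
  obtain ⟨k, hk, hsmall⟩ := ((hsum.tendsto_atTop_zero.eventually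
    (gt_mem_nhds (by positivity : (0 : ℝ) < c ^ 2 / B ^ 2))).and (eventually_ge_atTop N)).exists
  exact (hlow k hsmall).not_gt hk

theorem liminf_eq_zero_of_frequently_lt {α : Type*} {l : Filter α} [l.NeBot] {u : α → ℝ}
    (h0 : ∀ a, 0 ≤ u a) (h : ∀ ε > 0, ∃ᶠ a in l, u a < ε) : liminf u l = 0 := by
  have hbdd : IsBoundedUnder (· ≥ ·) l u := isBoundedUnder_of ⟨0, h0⟩
  refine le_antisymm (le_of_forall_pos_le_add fun ε hε => ?_) ?_
  · exact liminf_le_of_frequently_le ((h ε hε).mono fun a ha => by linarith) hbdd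
  · exact le_liminf_of_le
      (IsCoboundedUnder.of_frequently_le ((h 1 one_pos).mono fun a ha => ha.le))
      (Eventually.of_forall h0)

section Iteration

variable {m n : ℕ} {Gl Gu : Fin m → EuclideanSpace ℝ (Fin n) → ℝ}

theorem StdWolfe.le_of_psi_nonpos {ρ σ t : ℝ} {x d : EuclideanSpace ℝ (Fin n)}
    (hw : StdWolfe m n Gl Gu ρ σ x d t) (hρ : 0 ≤ ρ) (ht : 0 ≤ t)
    (hψ : psi m n Gl Gu x d ≤ 0) (i : Fin m) :
    Gl i (x + t • d) ≤ Gl i x ∧ Gu i (x + t • d) ≤ Gu i x := by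
  have hdec : ρ * t * psi m n Gl Gu x d ≤ 0 := mul_nonpos_of_nonneg_of_nonpos (by positivity) hψ
  exact ⟨by linarith [(hw.1 i).1], by linarith [(hw.1 i).2]⟩

theorem StdWolfe.one_sub_mul_neg_psi_le {ρ σ t L : ℝ} {x d : EuclideanSpace ℝ (Fin n)}
    (hw : StdWolfe m n Gl Gu ρ σ x d t) (ht : 0 ≤ t)
    (hLip : psi m n Gl Gu (x + t • d) d - psi m n Gl Gu x d ≤ L * ‖x + t • d - x‖ * ‖d‖) :
    (1 - σ) * -psi m n Gl Gu x d ≤ L * t * ‖d‖ ^ 2 := by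
  rw [add_sub_cancel_left, norm_smul, Real.norm_of_nonneg ht] at hLip
  linarith [hw.2]

theorem mem_levelSet_of_antitone {y : ℕ → EuclideanSpace ℝ (Fin n)}
    (hy : ∀ k i, Gl i (y (k + 1)) ≤ Gl i (y k) ∧ Gu i (y (k + 1)) ≤ Gu i (y k)) :
    ∀ k, y k ∈ LevelSet m n Gl Gu (y 0) := by
  intro k i
  induction k with
  | zero => exact ⟨le_rfl, le_rfl⟩
  | succ k ih => exact ⟨(hy k i).1.trans ih.1, (hy k i).2.trans ih.2⟩

end Iteration

theorem fr_convergence_std_wolfe_general (m n : ℕ) (hm : 0 < m)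
    (Gl Gu : Fin m → EuclideanSpace ℝ (Fin n) → ℝ)
    (vv : EuclideanSpace ℝ (Fin n) → EuclideanSpace ℝ (Fin n))
    (hvmin : ∀ y w : EuclideanSpace ℝ (Fin n),
      psi m n Gl Gu y (vv y) + (1/2) * ‖vv y‖^2 ≤ psi m n Gl Gu y w + (1/2) * ‖w‖^2)
    (ρ σ : ℝ) (hρ : 0 < ρ) (hσ : σ < 1)
    (x d : ℕ → EuclideanSpace ℝ (Fin n)) (t : ℕ → ℝ) (β : ℕ → ℝ)
    (hx : ∀ k : ℕ, x (k+1) = x k + t k • d k)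
    (ht : ∀ k : ℕ, 0 < t k)
    (hdk : ∀ k : ℕ, d (k+1) = vv (x (k+1)) + β (k+1) • d k)
    (hvne : ∀ k : ℕ, vv (x k) ≠ 0)
    (δ : ℝ) (hδ0 : 0 ≤ δ) (hδ1 : δ < 1)
    (hA1 : AssumptionA1 m n Gl Gu (x 0))
    (hA2 : AssumptionA2 m n Gl Gu (x 0))
    (hβ : ∀ k : ℕ, |β (k+1)| ≤
      δ * (psi m n Gl Gu (x (k+1)) (vv (x (k+1))) / psi m n Gl Gu (x k) (vv (x k))))
    (hc : ∃ c : ℝ, 0 < c ∧ ∀ k : ℕ,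
      psi m n Gl Gu (x k) (d k) ≤ c * psi m n Gl Gu (x k) (vv (x k)))
    (hw : ∀ k : ℕ, StdWolfe m n Gl Gu ρ σ (x k) (d k) (t k)) :
    Filter.liminf (fun k : ℕ => ‖vv (x k)‖) Filter.atTop = 0 := by
  have : NeZero m := ⟨hm.ne'⟩
  obtain ⟨c, hc0, hcd⟩ := hc
  have hv k : psi m n Gl Gu (x k) (vv (x k)) = -‖vv (x k)‖ ^ 2 :=
    psi_apply_eq_neg_norm_sq _ (hvmin _)
  have hdesc k : psi m n Gl Gu (x k) (d k) ≤ -(c * ‖vv (x k)‖ ^ 2) := by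
    simpa only [hv, mul_neg] using hcd k
  have hneg k : psi m n Gl Gu (x k) (d k) < 0 :=
    (hdesc k).trans_lt (neg_neg_of_pos (by have := norm_pos_iff.2 (hvne k); positivity))
  have hd k : 0 < ‖d k‖ := norm_pos_iff.2 fun h => (hneg k).ne (by rw [h, psi_zero])
  have hmono k i := hx k ▸ (hw k).le_of_psi_nonpos hρ.le (ht k).le (hneg k).le i
  have hlevel := mem_levelSet_of_antitone hmono
  obtain ⟨⟨C, hC⟩, -⟩ := hA2 x hlevel (fun i k => hmono k i) 0
  obtain ⟨L, hL, hLip⟩ := hA1.exists_psi_sub_psi_le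
  have hsum : Summable fun k => psi m n Gl Gu (x k) (d k) ^ 2 / ‖d k‖ ^ 2 :=
    summable_sq_div_sq_of_armijo_of_curvature hρ hσ hL hneg
      (fun k => hx k ▸ ((hw k).1 0).1) hC fun k => (hw k).one_sub_mul_neg_psi_le (ht k).le
        (hx k ▸ hLip _ (hlevel (k + 1)) _ (hlevel k) (d k))
  have hrec k : ‖d (k + 1)‖ ≤
      ‖vv (x (k + 1))‖ + δ * (‖vv (x (k + 1))‖ ^ 2 / ‖vv (x k)‖ ^ 2) * ‖d k‖ := by
    have hβk := hβ k
    rw [hv, hv, neg_div_neg_eq] at hβk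
    rw [hdk]
    exact (norm_add_le _ _).trans (by rw [norm_smul, Real.norm_eq_abs]; gcongr)
  exact liminf_eq_zero_of_frequently_lt (fun k => norm_nonneg _) fun ε hε =>
    frequently_lt_of_summable_sq_div_sq hc0 hδ0 hδ1 hε hd hdesc hrec hsum

theorem fr_convergence_std_wolfe (m n : ℕ) (hm : 0 < m) (hn : 0 < n)
    (Gl Gu : Fin m → EuclideanSpace ℝ (Fin n) → ℝ)
    (hGl : ∀ i, ContDiff ℝ 1 (Gl i)) (hGu : ∀ i, ContDiff ℝ 1 (Gu i))
    (hle : ∀ (i : Fin m) (x : EuclideanSpace ℝ (Fin n)), Gl i x ≤ Gu i x)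
    (vv : EuclideanSpace ℝ (Fin n) → EuclideanSpace ℝ (Fin n))
    (hvmin : ∀ y w : EuclideanSpace ℝ (Fin n),
      psi m n Gl Gu y (vv y) + (1/2) * ‖vv y‖^2 ≤ psi m n Gl Gu y w + (1/2) * ‖w‖^2)
    (ρ σ : ℝ) (hρ : 0 < ρ) (hρσ : ρ < σ) (hσ : σ < 1)
    (x d : ℕ → EuclideanSpace ℝ (Fin n)) (t : ℕ → ℝ) (β : ℕ → ℝ)
    (hx : ∀ k : ℕ, x (k+1) = x k + t k • d k)
    (ht : ∀ k : ℕ, 0 < t k)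
    (hd0 : d 0 = vv (x 0))
    (hdk : ∀ k : ℕ, d (k+1) = vv (x (k+1)) + β (k+1) • d k)
    (hvne : ∀ k : ℕ, vv (x k) ≠ 0)
    (δ : ℝ) (hδ0 : 0 ≤ δ) (hδ1 : δ < 1)
    (hA1 : AssumptionA1 m n Gl Gu (x 0))
    (hA2 : AssumptionA2 m n Gl Gu (x 0))
    (hβ : ∀ k : ℕ, |β (k+1)| ≤
      δ * (psi m n Gl Gu (x (k+1)) (vv (x (k+1))) / psi m n Gl Gu (x k) (vv (x k))))
    (hc : ∃ c : ℝ, 0 < c ∧ ∀ k : ℕ,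
      psi m n Gl Gu (x k) (d k) ≤ c * psi m n Gl Gu (x k) (vv (x k)))
    (hw : ∀ k : ℕ, StdWolfe m n Gl Gu ρ σ (x k) (d k) (t k)) :
    Filter.liminf (fun k : ℕ => ‖vv (x k)‖) Filter.atTop = 0 :=
  fr_convergence_std_wolfe_general m n hm Gl Gu vv hvmin ρ σ hρ hσ x d t β hx ht hdk hvne δ hδ0 hδ1
    hA1 hA2 hβ hc hw
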